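/- Define X = ∪_{a∈A} [0, δ(a)) × {a} and the Dumont–Thomas transformation T_σ : X → X by T_σ(y,b) = (α y − δ(p), a), where (p, a, s) is the unique decomposition σ(b) = p a s with α y − δ(p) ∈ [0, δ(a)). Then T_σ maps Frac(σ) = {(x,a) : a ∈ A, x ∈ Frac(σ,a)} onto itself; in fact, for every edge b →p a of the prefix automaton and every x ∈ Frac(σ,a), the element y = α⁻¹(x + δ(p)) lies in Frac(σ,b) and satisfies T_σ(y,b) = (x,a). -/

import Mathlib

/- Common setup: non-unit irreducible Pisot substitutions, following
Minervino–Thuswaldner, "The geometry of non-unit Pisot substitutions". -/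

open NumberField IsDedekindDomain MeasureTheory Filter

noncomputable section

/-- A substitution (given by the images of the letters) applied to a word. -/
def subApply {n : ℕ} (word : Fin n → List (Fin n)) (w : List (Fin n)) : List (Fin n) :=
  w.flatMap word

/-- The incidence matrix of a substitution: `(M_σ)_{a,b} = |σ(b)|_a`. -/
def incMat {n : ℕ} (word : Fin n → List (Fin n)) : Matrix (Fin n) (Fin n) ℚ :=
  fun a b => ((word b).count a : ℚ)

/-- `δ(w) = ⟨P(w), v_α⟩`, where `P` is the abelianisation map. -/
def dlt {n : ℕ} {K : Type*} [Field K] (v : Fin n → K) (w : List (Fin n)) : K :=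
  ∑ a : Fin n, (w.count a : K) * v a

/-- `σ` is an irreducible Pisot substitution with associated Pisot number `α ∈ K = ℚ(α)`,
where `embℝ : K →+* ℝ` is the distinguished real embedding (the place `𝔭₁`). -/
structure IsIrrPisot {n : ℕ} {K : Type*} [Field K] [NumberField K]
    (word : Fin n → List (Fin n)) (α : K) (embℝ : K →+* ℝ) : Prop where
  npos : 0 < n
  word_ne : ∀ a, word a ≠ []
  integral : IsIntegral ℤ α
  gen : IntermediateField.adjoin ℚ ({α} : Set K) = ⊤
  one_lt : 1 < embℝ α
  conj_lt : ∀ φ : K →+* ℂ, φ α ≠ (embℝ α : ℂ) → ‖φ α‖ < 1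
  charpoly_irr : Irreducible (incMat word).charpoly
  charpoly_root : Polynomial.aeval α (incMat word).charpoly = 0

/-- `v` is a left eigenvector of the incidence matrix for the eigenvalue `α`,
with entries positive under the real embedding `𝔭₁`. -/
structure IsPisotEigenvector {n : ℕ} {K : Type*} [Field K] [NumberField K]
    (word : Fin n → List (Fin n)) (α : K) (embℝ : K →+* ℝ) (v : Fin n → K) : Prop where
  left_eig : ∀ b, ∑ a : Fin n, ((word b).count a : K) * v a = α * v b
  pos : ∀ i, 0 < embℝ (v i)

/-- The ℤ-module `V = ⟨v₁,…,vₙ⟩_ℤ`. -/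
def Vmod {n : ℕ} {K : Type*} [Field K] (v : Fin n → K) : Submodule ℤ K :=
  Submodule.span ℤ (Set.range v)

/-- The ℤ-module `V·ℤ[α⁻¹]` of finite sums `Σ xⱼ α^{−kⱼ}`, `xⱼ ∈ V`. -/
def VZmod {n : ℕ} {K : Type*} [Field K] (α : K) (v : Fin n → K) : Submodule ℤ K :=
  Submodule.span ℤ {y : K | ∃ (i : Fin n) (k : ℕ), y = v i * α⁻¹ ^ k}

/-- `Frac(σ,a) = V·ℤ[α⁻¹] ∩ [0, δ(a))` (interval taken in `ℝ` under `𝔭₁`). -/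
def fracSet {n : ℕ} {K : Type*} [Field K] (α : K) (v : Fin n → K) (embℝ : K →+* ℝ)
    (a : Fin n) : Set K :=
  {x : K | x ∈ VZmod α v ∧ 0 ≤ embℝ x ∧ embℝ x < embℝ (v a)}

variable (K : Type*) [Field K] [NumberField K]

/-- The representation space `K_σ`, the product of the completions of `K` at all places of
`S_α` other than `𝔭₁`: the real places `≠ 𝔭₁`, the complex places, and the finite primes
dividing `(α)`. -/
abbrev RepSpace (α : K) (p₁ : InfinitePlace K) : Type _ :=
  ({w : InfinitePlace K // w.IsReal ∧ w ≠ p₁} → ℝ) ×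
  ({w : InfinitePlace K // w.IsComplex} → ℂ) ×
  ((w : {w : HeightOneSpectrum (𝓞 K) // w.valuation K α < 1}) → w.1.adicCompletion K)

/-- `K_α = K_{𝔭₁} × K_σ = ℝ × K_σ`. -/
abbrev FullSpace (α : K) (p₁ : InfinitePlace K) : Type _ := ℝ × RepSpace K α p₁

/-- The diagonal embedding `Φ' : K → K_σ`. -/
def embσ (α : K) (p₁ : InfinitePlace K) : K →+* RepSpace K α p₁ :=
  (Pi.ringHom fun w => InfinitePlace.embedding_of_isReal w.2.1).prod
    ((Pi.ringHom fun w => w.1.embedding).prod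
      (Pi.ringHom fun w => algebraMap K (w.1.adicCompletion K)))

/-- The diagonal embedding `Φ : K → K_α`. -/
def embα (α : K) (p₁ : InfinitePlace K) (embℝ : K →+* ℝ) : K →+* FullSpace K α p₁ :=
  embℝ.prod (embσ K α p₁)


/-- `T_ext⁻¹` acting on `K_α × A` (used for the stepped surface). -/
def TinvFull {n : ℕ} (word : Fin n → List (Fin n)) (α : K) (v : Fin n → K)
    (p₁ : InfinitePlace K) (embℝ : K →+* ℝ) (q : FullSpace K α p₁ × Fin n) :
    Set (FullSpace K α p₁ × Fin n) :=
  {r | ∃ p s : List (Fin n), word r.2 = p ++ q.2 :: s ∧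
        r.1 = embα K α p₁ embℝ α⁻¹ * (q.1 + embα K α p₁ embℝ (dlt v p))}

/-- The stepped surface `S = {(Φ(x), a) : x ∈ Frac(σ,a)} ⊆ K_α × A`. -/
def steppedSurface {n : ℕ} (α : K) (v : Fin n → K) (p₁ : InfinitePlace K)
    (embℝ : K →+* ℝ) : Set (FullSpace K α p₁ × Fin n) :=
  {q | ∃ x ∈ fracSet α v embℝ q.2, q.1 = embα K α p₁ embℝ x}

variable {K}

/-- A uniformly discrete subset of a topological additive group. -/
def UnifDiscrete {G : Type*} [AddGroup G] [TopologicalSpace G] (W : Set G) : Prop :=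
  ∃ U ∈ nhds (0 : G), ∀ x ∈ W, ∀ y ∈ W, x ≠ y → x - y ∉ U

/-- A relatively dense subset of a topological additive group. -/
def RelDense {G : Type*} [AddGroup G] [TopologicalSpace G] (W : Set G) : Prop :=
  ∃ C : Set G, IsCompact C ∧ ∀ z : G, ∃ w ∈ W, z - w ∈ C

/-- A Delone set: uniformly discrete and relatively dense. -/
def IsDeloneSet {G : Type*} [AddGroup G] [TopologicalSpace G] (W : Set G) : Prop :=
  UnifDiscrete W ∧ RelDense W

variable (K)

/-- The translation set `Γ = {(Φ'(x), a) : x ∈ Frac(σ,a)} ⊆ K_σ × A`. -/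
def transSet {n : ℕ} (α : K) (v : Fin n → K) (p₁ : InfinitePlace K) (embℝ : K →+* ℝ) :
    Set (RepSpace K α p₁ × Fin n) :=
  {q | ∃ x ∈ fracSet α v embℝ q.2, q.1 = embσ K α p₁ x}

/-- The Dumont–Thomas subtile `R_σ(a) ⊆ K_σ`: all limits of the partial sums of series
`Σ_{i ≥ 0} α^i Φ'(δ(pᵢ))` over labels `(pᵢ)` of left-infinite walks `⋯ → a₁ → a₀ = a`
in the prefix automaton. -/
def subtile {n : ℕ} (word : Fin n → List (Fin n)) (α : K) (v : Fin n → K)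
    (p₁ : InfinitePlace K) (a : Fin n) : Set (RepSpace K α p₁) :=
  {z | ∃ (st : ℕ → Fin n) (pre : ℕ → List (Fin n)),
    st 0 = a ∧
    (∀ i : ℕ, ∃ s : List (Fin n), word (st (i + 1)) = pre i ++ st i :: s) ∧
    Tendsto (fun N => ∑ i ∈ Finset.range N, embσ K α p₁ (α ^ i * dlt v (pre i)))
      atTop (nhds z)}

/-- The extension `T_ext⁻¹` acting on `K_σ × A`:
`T_ext⁻¹(γ,a) = ⋃_{b →p a} {(α⁻¹(γ + Φ'(δ(p))), b)}`. -/
def Tinv {n : ℕ} (word : Fin n → List (Fin n)) (α : K) (v : Fin n → K)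
    (p₁ : InfinitePlace K) (q : RepSpace K α p₁ × Fin n) : Set (RepSpace K α p₁ × Fin n) :=
  {r | ∃ p s : List (Fin n), word r.2 = p ++ q.2 :: s ∧
        r.1 = embσ K α p₁ α⁻¹ * (q.1 + embσ K α p₁ (dlt v p))}

/-- `T_ext⁻¹` acting elementwise on sets of pairs. -/
def TinvSet {n : ℕ} (word : Fin n → List (Fin n)) (α : K) (v : Fin n → K)
    (p₁ : InfinitePlace K) (S : Set (RepSpace K α p₁ × Fin n)) :
    Set (RepSpace K α p₁ × Fin n) :=
  ⋃ q ∈ S, Tinv K word α v p₁ q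

/-- The geometric property (F): `Γ = ⋃_{m ≥ 0} T_ext^{−m}(U)` with `U = {(0,a) : a ∈ A}`. -/
def PropertyF {n : ℕ} (word : Fin n → List (Fin n)) (α : K) (v : Fin n → K)
    (p₁ : InfinitePlace K) (embℝ : K →+* ℝ) : Prop :=
  transSet K α v p₁ embℝ =
    ⋃ m : ℕ, (TinvSet K word α v p₁)^[m] {q : RepSpace K α p₁ × Fin n | q.1 = 0}

variable {K}

/-- The strong coincidence condition. -/
def StrongCoincidence {n : ℕ} (word : Fin n → List (Fin n)) : Prop :=
  ∀ b₁ b₂ : Fin n, ∃ (k : ℕ) (a : Fin n) (p₁ s₁ p₂ s₂ : List (Fin n)),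
    (subApply word)^[k] [b₁] = p₁ ++ a :: s₁ ∧
    (subApply word)^[k] [b₂] = p₂ ++ a :: s₂ ∧
    ((∀ c : Fin n, p₁.count c = p₂.count c) ∨ (∀ c : Fin n, s₁.count c = s₂.count c))

/-- The element `Multiplicative.ofAdd (−m)` of `ℤₘ₀`; the valuation `v_𝔭(x) ≥ m` is
expressed as `v.valuation x ≤ zhat m`. -/
def zhat (m : ℤ) : WithZero (Multiplicative ℤ) :=
  ((Multiplicative.ofAdd (-m) : Multiplicative ℤ) : WithZero (Multiplicative ℤ))


/-
Write `σ(b) = p a s`. Since `v` is a left eigenvector, `α δ(b) = δ(σ(b)) = δ(p) + δ(a) + δ(s)`,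
so the half-open intervals `[δ(p), δ(p) + δ(a))` attached to the decompositions of `σ(b)` are
disjoint and tile `[0, α δ(b))`. Hence `x ∈ [0, δ(a))` puts `α y = x + δ(p)` in the interval of
`(p, a, s)` and in no other, and `y ∈ [0, δ(b))`; `y ∈ V·ℤ[α⁻¹]` because `δ(p) ∈ V` and
`V·ℤ[α⁻¹]` is stable under `α⁻¹`. Every letter occurs in some `σ(b)`: otherwise `M_σ` has a zero
row, so `X` divides the irreducible characteristic polynomial, forcing `α = 0`.
-/

open Polynomial

theorem Polynomial.eq_zero_of_irreducible_of_coeff_zero_eq_zero {F A : Type*} [Field F]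
    [CommRing A] [Algebra F A] {p : F[X]} (hp : Irreducible p) (h0 : p.coeff 0 = 0) {α : A}
    (hα : aeval α p = 0) : α = 0 := by
  obtain ⟨u, rfl⟩ := irreducible_X.associated_of_dvd hp (X_dvd_iff.2 h0)
  rw [map_mul, aeval_X] at hα
  exact (Units.mul_left_eq_zero (u.map (aeval α).toMonoidHom)).mp hα

theorem Matrix.det_ne_zero_of_irreducible_charpoly {ι F A : Type*} [Fintype ι] [DecidableEq ι]
    [Field F] [CommRing A] [Algebra F A] {M : Matrix ι ι F} (hM : Irreducible M.charpoly)
    {α : A} (hα : aeval α M.charpoly = 0) (hα0 : α ≠ 0) : M.det ≠ 0 := by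
  intro hdet
  refine hα0 (eq_zero_of_irreducible_of_coeff_zero_eq_zero hM ?_ hα)
  rw [det_eq_sign_charpoly_coeff] at hdet
  exact (mul_eq_zero.mp hdet).resolve_left (pow_ne_zero _ (neg_ne_zero.2 one_ne_zero))

theorem List.append_cons_eq_append_cons_cases {β : Type*} {p s p' s' : List β} {a a' : β}
    (h : p ++ a :: s = p' ++ a' :: s') :
    (p' = p ∧ a' = a ∧ s' = s) ∨ (∃ t, p' = p ++ a :: t) ∨ (∃ t, p = p' ++ a' :: t) := by
  rcases List.append_eq_append_iff.mp h with ⟨u, rfl, hu⟩ | ⟨u, rfl, hu⟩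
  · rcases List.cons_eq_append_iff.mp hu with ⟨rfl, hu⟩ | ⟨t, rfl, -⟩
    · simp_all
    · exact Or.inr (Or.inl ⟨t, rfl⟩)
  · rcases List.cons_eq_append_iff.mp hu with ⟨rfl, hu⟩ | ⟨t, rfl, -⟩
    · simp_all
    · exact Or.inr (Or.inr ⟨t, rfl⟩)

section Dlt

variable {n : ℕ} {K : Type*} [Field K] (v : Fin n → K)

theorem dlt_append (p q : List (Fin n)) : dlt v (p ++ q) = dlt v p + dlt v q := by
  simp only [dlt, List.count_append, Nat.cast_add, add_mul, Finset.sum_add_distrib]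

theorem dlt_cons (a : Fin n) (s : List (Fin n)) : dlt v (a :: s) = v a + dlt v s := by
  simp only [dlt, List.count_cons, beq_iff_eq, Nat.cast_add, Nat.cast_ite, Nat.cast_one,
    Nat.cast_zero, add_mul, ite_mul, one_mul, zero_mul, Finset.sum_add_distrib,
    Finset.sum_ite_eq, Finset.mem_univ, if_true]
  ring

theorem map_dlt_nonneg (f : K →+* ℝ) (hv : ∀ i, 0 ≤ f (v i)) (w : List (Fin n)) :
    0 ≤ f (dlt v w) := by
  rw [dlt, map_sum]
  exact Finset.sum_nonneg fun a _ => by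
    rw [map_mul, map_natCast]
    exact mul_nonneg (Nat.cast_nonneg _) (hv a)

theorem map_dlt_add_le_map_dlt_append_cons (f : K →+* ℝ) (hv : ∀ i, 0 ≤ f (v i))
    (p t : List (Fin n)) (a : Fin n) :
    f (dlt v p) + f (v a) ≤ f (dlt v (p ++ a :: t)) := by
  rw [dlt_append, dlt_cons, map_add, map_add]
  linarith [map_dlt_nonneg v f hv t]

theorem append_cons_eq_of_mem_Ico_map_dlt (f : K →+* ℝ) (hv : ∀ i, 0 ≤ f (v i))
    {p s p' s' : List (Fin n)} {a a' : Fin n} (h : p ++ a :: s = p' ++ a' :: s') {y : ℝ}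
    (hy : y ∈ Set.Ico (f (dlt v p)) (f (dlt v p) + f (v a)))
    (hy' : y ∈ Set.Ico (f (dlt v p')) (f (dlt v p') + f (v a'))) :
    p' = p ∧ a' = a ∧ s' = s := by
  rcases List.append_cons_eq_append_cons_cases h with heq | ⟨t, rfl⟩ | ⟨t, rfl⟩
  · exact heq
  · linarith [hy.2, hy'.1, map_dlt_add_le_map_dlt_append_cons v f hv p t a]
  · linarith [hy.1, hy'.2, map_dlt_add_le_map_dlt_append_cons v f hv p' t a']

theorem v_mem_VZmod (α : K) (i : Fin n) : v i ∈ VZmod α v :=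
  Submodule.subset_span ⟨i, 0, by simp⟩

theorem dlt_mem_VZmod (α : K) (w : List (Fin n)) : dlt v w ∈ VZmod α v :=
  Submodule.sum_mem _ fun a _ => by
    simpa only [nsmul_eq_mul] using Submodule.smul_of_tower_mem _ (w.count a) (v_mem_VZmod v α a)

theorem inv_mul_mem_VZmod (α : K) {x : K} (hx : x ∈ VZmod α v) : α⁻¹ * x ∈ VZmod α v := by
  refine Submodule.span_induction (p := fun x _ => α⁻¹ * x ∈ VZmod α v) ?_ ?_ ?_ ?_ hx
  · rintro _ ⟨i, k, rfl⟩
    exact Submodule.subset_span ⟨i, k + 1, by ring⟩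
  · simp
  · intro x y _ _ hx hy
    simpa only [mul_add] using add_mem hx hy
  · intro m x _ hx
    simpa only [mul_smul_comm] using Submodule.smul_mem _ m hx

end Dlt

section Pisot

variable {n : ℕ} {K : Type*} [Field K] [NumberField K] {word : Fin n → List (Fin n)} {α : K}
  {embℝ : K →+* ℝ} {v : Fin n → K}

theorem IsIrrPisot.map_pos (hσ : IsIrrPisot word α embℝ) : 0 < embℝ α :=
  one_pos.trans hσ.one_lt

theorem IsIrrPisot.ne_zero (hσ : IsIrrPisot word α embℝ) : α ≠ 0 := by
  rintro rfl
  simpa using hσ.map_pos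

theorem IsPisotEigenvector.inv_mul_add_dlt_mem_fracSet (hv : IsPisotEigenvector word α embℝ v)
    (hα : 0 < embℝ α) {b a : Fin n} {p s : List (Fin n)} (hword : word b = p ++ a :: s)
    {x : K} (hx : x ∈ fracSet α v embℝ a) : α⁻¹ * (x + dlt v p) ∈ fracSet α v embℝ b := by
  obtain ⟨hxV, hx0, hxa⟩ := hx
  have hδp := map_dlt_nonneg v embℝ (fun i => (hv.pos i).le) p
  have hδs := map_dlt_nonneg v embℝ (fun i => (hv.pos i).le) s
  have hδb : embℝ α * embℝ (v b) = embℝ (dlt v p) + embℝ (v a) + embℝ (dlt v s) := by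
    have h := congrArg embℝ (hv.left_eig b)
    rw [← dlt, hword, dlt_append, dlt_cons] at h
    simp only [map_add, map_mul] at h
    linarith
  refine ⟨inv_mul_mem_VZmod v α (add_mem hxV (dlt_mem_VZmod v α p)), ?_, ?_⟩
  · rw [map_mul, map_inv₀]
    exact mul_nonneg (inv_nonneg.2 hα.le) (by rw [map_add]; linarith)
  · rw [map_mul, map_inv₀, inv_mul_lt_iff₀ hα, map_add]
    linarith

theorem IsIrrPisot.exists_mem_word (hσ : IsIrrPisot word α embℝ) (a : Fin n) :
    ∃ b, a ∈ word b := by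
  by_contra! h
  refine Matrix.det_ne_zero_of_irreducible_charpoly hσ.charpoly_irr hσ.charpoly_root
    hσ.ne_zero ?_
  exact Matrix.det_eq_zero_of_row_eq_zero a fun b => by simp [incMat, List.count_eq_zero.2 (h b)]

end Pisot

theorem stmt6_general {n : ℕ} {K : Type*} [Field K] [NumberField K]
    (word : Fin n → List (Fin n)) (α : K) (embℝ : K →+* ℝ) (v : Fin n → K)
    (hσ : IsIrrPisot word α embℝ)
    (hv : IsPisotEigenvector word α embℝ v) :
    (∀ (b a : Fin n) (p s : List (Fin n)), word b = p ++ a :: s →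
      ∀ x ∈ fracSet α v embℝ a,
        α⁻¹ * (x + dlt v p) ∈ fracSet α v embℝ b ∧
        (∀ (p' : List (Fin n)) (a' : Fin n) (s' : List (Fin n)),
          word b = p' ++ a' :: s' →
          0 ≤ embℝ (α * (α⁻¹ * (x + dlt v p)) - dlt v p') →
          embℝ (α * (α⁻¹ * (x + dlt v p)) - dlt v p') < embℝ (v a') →
          p' = p ∧ a' = a ∧ s' = s)) ∧
    (∀ a : Fin n, ∀ x ∈ fracSet α v embℝ a,
      ∃ (b : Fin n) (p s : List (Fin n)), word b = p ++ a :: s) := by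
  refine ⟨fun b a p s hword x hx => ⟨hv.inv_mul_add_dlt_mem_fracSet hσ.map_pos hword hx, ?_⟩,
    fun a _ _ => ?_⟩
  · intro p' a' s' hword' h0 h1
    rw [mul_inv_cancel_left₀ hσ.ne_zero, map_sub, map_add] at h0 h1
    obtain ⟨-, hx0, hxa⟩ := hx
    exact append_cons_eq_of_mem_Ico_map_dlt v embℝ (fun i => (hv.pos i).le)
      (hword.symm.trans hword') (y := embℝ x + embℝ (dlt v p))
      ⟨by linarith, by linarith⟩ ⟨by linarith, by linarith⟩
  · obtain ⟨b, hb⟩ := hσ.exists_mem_word a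
    obtain ⟨p, s, hps⟩ := List.append_of_mem hb
    exact ⟨b, p, s, hps⟩

/-- the Dumont–Thomas transformation `T_σ` maps `Frac(σ)` onto itself:
for every edge `b →p a` of the prefix automaton and every `x ∈ Frac(σ,a)`, the element
`y = α⁻¹(x + δ(p))` lies in `Frac(σ,b)` and `T_σ(y,b) = (x,a)` (i.e. `(p,a,s)` is the unique
decomposition of `σ(b)` with `αy − δ(p) ∈ [0, δ(a))`); moreover every `(x,a) ∈ Frac(σ)`
arises this way. -/
theorem stmt6 {n : ℕ} {K : Type*} [Field K] [NumberField K]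
    (word : Fin n → List (Fin n)) (α : K) (p₁ : InfinitePlace K) (hp₁ : p₁.IsReal)
    (embℝ : K →+* ℝ) (hembℝ : embℝ = InfinitePlace.embedding_of_isReal hp₁)
    (v : Fin n → K)
    (hσ : IsIrrPisot word α embℝ)
    (hv : IsPisotEigenvector word α embℝ v) :
    (∀ (b a : Fin n) (p s : List (Fin n)), word b = p ++ a :: s →
      ∀ x ∈ fracSet α v embℝ a,
        α⁻¹ * (x + dlt v p) ∈ fracSet α v embℝ b ∧
        (∀ (p' : List (Fin n)) (a' : Fin n) (s' : List (Fin n)),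
          word b = p' ++ a' :: s' →
          0 ≤ embℝ (α * (α⁻¹ * (x + dlt v p)) - dlt v p') →
          embℝ (α * (α⁻¹ * (x + dlt v p)) - dlt v p') < embℝ (v a') →
          p' = p ∧ a' = a ∧ s' = s)) ∧
    (∀ a : Fin n, ∀ x ∈ fracSet α v embℝ a,
      ∃ (b : Fin n) (p s : List (Fin n)), word b = p ++ a :: s) :=
  stmt6_general word α embℝ v hσ hv
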